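/- arXiv:2503.15477 — 3 statements merged into one kernel-verified Lean document; each statement's English description precedes it below -/
import Mathlib

section
/- Fix a parameter θ ∈ ℝ^P and a prompt x ∈ X, let λ ≥ 0 and let M > 1. Define the KL-regularized reward r^KL(x,y;θ) = r_RM(x,y) − λ ln(π_θ(y|x)/π_{θ_ref}(y|x)) for a reference parameter θ_ref, and the per-prompt objective φ(θ;x) = Σ_{y∈Y} π_θ(y|x) r^KL(x,y;θ). If r^KL(x,y;θ) ∈ [−M, M] for all y ∈ Y, then ‖∇_θ φ(θ;x)‖ ≤ 6 M^{1/3} L J_x · (Var_{y∼π_θ(·|x)}[r^KL(x,y;θ)])^{1/3}, where J_x is the supremum over y ∈ Y and l ∈ {1,…,L} of the spectral norm of the Jacobian of θ ↦ f_θ(x, y_{<l}), and Var_{y∼π_θ(·|x)}[r^KL(x,y;θ)] = Σ_{y∈Y} π_θ(y|x)(r^KL(x,y;θ) − φ(θ;x))². -/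
/-!
Write `π_θ = exp (log π_θ)`, where `log π_θ(y|x)` is a sum of `L` log-softmax terms, each of
which has `θ`-derivative of norm at most `2 J_x`. Then `∇π_θ = π_θ ∇log π_θ` and
`∇r^KL = -λ ∇log π_θ`, and since `Σ_y π_θ ∇log π_θ = ∇ Σ_y π_θ = 0`, both the `λ`-term and the
baseline `φ` drop out: `∇φ = Σ_y π_θ (r^KL - φ) ∇log π_θ`. Hence
`‖∇φ‖ ≤ 2 L J_x E|r^KL - φ| ≤ 2 L J_x √Var`, and `Var ≤ E[(r^KL)²] ≤ M²` gives
`√Var ≤ M^{1/3} Var^{1/3}`.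
-/

/-- A general autoregressive policy: `π_θ(y|x) = ∏_l softmax(f_θ(x, y_{<l}))_{y_l}`, where
`f` maps parameters, a prompt, an output (only its prefix `y_{<l}` matters), and a position
to a logit vector in `ℝ^V`. -/
noncomputable def softmaxPolicy {P L : ℕ} {V X : Type*} [Fintype V]
    (f : EuclideanSpace ℝ (Fin P) → X → (Fin L → V) → Fin L → EuclideanSpace ℝ V)
    (θ : EuclideanSpace ℝ (Fin P)) (x : X) (y : Fin L → V) : ℝ :=
  ∏ l : Fin L, Real.exp (f θ x y l (y l)) / ∑ v : V, Real.exp (f θ x y l v)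

open Finset

theorem EuclideanSpace.norm_proj_le {ι : Type*} [Fintype ι] (i : ι) :
    ‖(EuclideanSpace.proj i : EuclideanSpace ℝ ι →L[ℝ] ℝ)‖ ≤ 1 :=
  ContinuousLinearMap.opNorm_le_bound _ zero_le_one fun u => by
    simpa using PiLp.norm_apply_le u i

theorem norm_sum_smul_le {ι F : Type*} [SeminormedAddCommGroup F] [NormedSpace ℝ F]
    (s : Finset ι) (a : ι → ℝ) (u : ι → F) {C : ℝ} (hu : ∀ i ∈ s, ‖u i‖ ≤ C) :
    ‖∑ i ∈ s, a i • u i‖ ≤ C * ∑ i ∈ s, |a i| := by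
  rw [mul_sum]
  refine (norm_sum_le _ _).trans (sum_le_sum fun i hi => ?_)
  rw [norm_smul, Real.norm_eq_abs, mul_comm C]
  exact mul_le_mul_of_nonneg_left (hu i hi) (abs_nonneg _)

theorem sum_prod_eq_one_of_prefix {V : Type*} [Fintype V] :
    ∀ {n : ℕ} [Nonempty (Fin n → V)] (p : (Fin n → V) → Fin n → V → ℝ),
      (∀ y y' l, (∀ l' < l, y l' = y' l') → p y l = p y' l) →
      (∀ y l, ∑ v, p y l v = 1) → ∑ y : Fin n → V, ∏ l, p y l (y l) = 1
  | 0, _, _, _, _ => by simp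
  | n + 1, ⟨y₀⟩, p, hprefix, hsum => by
    set v₀ := y₀ 0
    have : Nonempty (Fin n → V) := ⟨fun _ => v₀⟩
    have hhead : ∀ a y', p (Fin.cons a y') 0 = p (fun _ => v₀) 0 :=
      fun a y' => hprefix _ _ 0 fun l' hl' => absurd hl' (Fin.not_lt_zero l')
    have htail : ∀ a, ∑ y' : Fin n → V, ∏ l : Fin n, p (Fin.cons a y') l.succ (y' l) = 1 :=
      fun a => sum_prod_eq_one_of_prefix (fun y' l => p (Fin.cons a y') l.succ)
        (fun y y' l h => hprefix _ _ _ fun l' hl' => by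
          cases l' using Fin.cases with
          | zero => rfl
          | succ l' => simpa using h l' (Fin.succ_lt_succ_iff.mp hl'))
        (fun y' l => hsum _ _)
    have hsplit : ∀ F : (Fin (n + 1) → V) → ℝ,
        ∑ y, F y = ∑ a, ∑ y' : Fin n → V, F (Fin.cons a y') := fun F => by
      rw [← Fintype.sum_prod_type']
      exact (Fintype.sum_equiv (Fin.consEquiv fun _ => V) _ _ fun _ => rfl).symm
    calc ∑ y : Fin (n + 1) → V, ∏ l, p y l (y l)
        = ∑ a, p (fun _ => v₀) 0 a *
            ∑ y' : Fin n → V, ∏ l : Fin n, p (Fin.cons a y') l.succ (y' l) := by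
          simp only [hsplit, Fin.prod_univ_succ, Fin.cons_zero, Fin.cons_succ, hhead, mul_sum]
      _ = 1 := by simp only [htail, mul_one, hsum]

theorem exists_hasFDerivAt_logSoftmax {V : Type*} [Fintype V] (u : EuclideanSpace ℝ V) (v : V) :
    ∃ D : EuclideanSpace ℝ V →L[ℝ] ℝ,
      HasFDerivAt (fun w : EuclideanSpace ℝ V => w v - Real.log (∑ v', Real.exp (w v'))) D u ∧
        ‖D‖ ≤ 2 := by
  set Z := ∑ v', Real.exp (u v')
  have hZ : 0 < Z := (Real.exp_pos _).trans_le <|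
    single_le_sum (fun v' _ => (Real.exp_pos (u v')).le) (mem_univ v)
  have hproj : ∀ v', HasFDerivAt (fun w : EuclideanSpace ℝ V => w v')
      (EuclideanSpace.proj v' : EuclideanSpace ℝ V →L[ℝ] ℝ) u :=
    fun v' => (EuclideanSpace.proj (𝕜 := ℝ) v').hasFDerivAt (x := u)
  refine ⟨_, (hproj v).sub ((HasFDerivAt.fun_sum fun v' _ => (hproj v').exp).log hZ.ne'), ?_⟩
  have hsoft : ‖Z⁻¹ • ∑ v', Real.exp (u v') • (EuclideanSpace.proj v' : EuclideanSpace ℝ V →L[ℝ] ℝ)‖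
      ≤ 1 := by
    rw [norm_smul, Real.norm_of_nonneg (inv_nonneg.mpr hZ.le), inv_mul_le_iff₀ hZ, mul_one]
    calc _ ≤ 1 * ∑ v', |Real.exp (u v')| :=
          norm_sum_smul_le _ _ _ fun v' _ => EuclideanSpace.norm_proj_le v'
      _ = Z := by simp only [one_mul, abs_of_pos (Real.exp_pos _), Z]
  calc _ ≤ ‖(EuclideanSpace.proj v : EuclideanSpace ℝ V →L[ℝ] ℝ)‖ + 1 :=
        norm_sub_le_of_le le_rfl hsoft
    _ ≤ 2 := by linarith [EuclideanSpace.norm_proj_le (ι := V) v]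

section Policy

variable {P L : ℕ} {V X : Type*} [Fintype V]
  (f : EuclideanSpace ℝ (Fin P) → X → (Fin L → V) → Fin L → EuclideanSpace ℝ V)

theorem sum_exp_logit_pos (θ : EuclideanSpace ℝ (Fin P)) (x : X) (y : Fin L → V) (l : Fin L) :
    0 < ∑ v, Real.exp (f θ x y l v) :=
  (Real.exp_pos _).trans_le <|
    single_le_sum (fun v _ => (Real.exp_pos (f θ x y l v)).le) (mem_univ (y l))

theorem softmaxPolicy_pos (θ : EuclideanSpace ℝ (Fin P)) (x : X) (y : Fin L → V) :
    0 < softmaxPolicy f θ x y :=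
  prod_pos fun l _ => div_pos (Real.exp_pos _) (sum_exp_logit_pos f θ x y l)

theorem log_softmaxPolicy (θ : EuclideanSpace ℝ (Fin P)) (x : X) (y : Fin L → V) :
    Real.log (softmaxPolicy f θ x y) =
      ∑ l, (f θ x y l (y l) - Real.log (∑ v, Real.exp (f θ x y l v))) := by
  rw [softmaxPolicy,
    Real.log_prod fun l _ => (div_pos (Real.exp_pos _) (sum_exp_logit_pos f θ x y l)).ne']
  refine sum_congr rfl fun l _ => ?_
  rw [Real.log_div (Real.exp_pos _).ne' (sum_exp_logit_pos f θ x y l).ne', Real.log_exp]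

theorem sum_softmaxPolicy [Nonempty (Fin L → V)] (x : X)
    (hprefix : ∀ θ (y y' : Fin L → V) (l : Fin L),
      (∀ l' < l, y l' = y' l') → f θ x y l = f θ x y' l)
    (θ : EuclideanSpace ℝ (Fin P)) : ∑ y, softmaxPolicy f θ x y = 1 :=
  sum_prod_eq_one_of_prefix (fun y l v => Real.exp (f θ x y l v) / ∑ v', Real.exp (f θ x y l v'))
    (fun y y' l h => by simp only [hprefix θ y y' l h])
    (fun y l => by rw [← sum_div, div_self (sum_exp_logit_pos f θ x y l).ne'])

theorem exists_hasFDerivAt_log_softmaxPolicy (θ : EuclideanSpace ℝ (Fin P)) (x : X) (y : Fin L → V)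
    (hdiff : ∀ l, DifferentiableAt ℝ (fun ϑ => f ϑ x y l) θ) {J : ℝ}
    (hJ : ∀ l, ‖fderiv ℝ (fun ϑ => f ϑ x y l) θ‖ ≤ J) :
    ∃ D : EuclideanSpace ℝ (Fin P) →L[ℝ] ℝ,
      HasFDerivAt (fun ϑ => Real.log (softmaxPolicy f ϑ x y)) D θ ∧ ‖D‖ ≤ 2 * L * J := by
  choose D hD hD2 using fun l => exists_hasFDerivAt_logSoftmax (f θ x y l) (y l)
  refine ⟨∑ l, (D l).comp (fderiv ℝ (fun ϑ => f ϑ x y l) θ), ?_, ?_⟩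
  · simp only [log_softmaxPolicy]
    exact HasFDerivAt.fun_sum fun l _ => ((hD l).comp θ (hdiff l).hasFDerivAt :)
  · calc _ ≤ ∑ l : Fin L, 2 * J := (norm_sum_le _ _).trans <| sum_le_sum fun l _ =>
          (ContinuousLinearMap.opNorm_comp_le _ _).trans <|
            mul_le_mul (hD2 l) (hJ l) (norm_nonneg _) zero_le_two
      _ = 2 * L * J := by simp only [sum_const, card_univ, Fintype.card_fin, nsmul_eq_mul]; ring

theorem hasFDerivAt_klReward {θ : EuclideanSpace ℝ (Fin P)} {x : X} {y : Fin L → V}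
    {D : EuclideanSpace ℝ (Fin P) →L[ℝ] ℝ}
    (hD : HasFDerivAt (fun ϑ => Real.log (softmaxPolicy f ϑ x y)) D θ)
    (θref : EuclideanSpace ℝ (Fin P)) (c lam : ℝ) :
    HasFDerivAt (fun ϑ => c - lam * Real.log (softmaxPolicy f ϑ x y / softmaxPolicy f θref x y))
      ((-lam) • D) θ := by
  simp only [Real.log_div (softmaxPolicy_pos f _ x y).ne' (softmaxPolicy_pos f θref x y).ne']
  rw [neg_smul lam D]
  exact ((hD.sub_const _).const_mul lam).const_sub c

end Policy

theorem hasFDerivAt_sum_mul_of_hasFDerivAt_log {Y E : Type*} [Fintype Y] [NormedAddCommGroup E]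
    [NormedSpace ℝ E] {π r : E → Y → ℝ} {D : Y → E →L[ℝ] ℝ} {θ : E} (c : ℝ)
    (hpos : ∀ ϑ y, 0 < π ϑ y) (hsum : ∀ ϑ, ∑ y, π ϑ y = 1)
    (hlog : ∀ y, HasFDerivAt (fun ϑ => Real.log (π ϑ y)) (D y) θ)
    (hr : ∀ y, HasFDerivAt (fun ϑ => r ϑ y) (c • D y) θ) :
    HasFDerivAt (fun ϑ => ∑ y, π ϑ y * r ϑ y)
      (∑ y, (π θ y * (r θ y - ∑ y', π θ y' * r θ y')) • D y) θ := by
  have hπ : ∀ y, HasFDerivAt (fun ϑ => π ϑ y) (π θ y • D y) θ := fun y => by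
    simpa only [Real.exp_log (hpos _ y)] using (hlog y).exp
  have hscore : ∑ y, π θ y • D y = 0 := by
    refine (HasFDerivAt.fun_sum fun y _ => hπ y).unique ?_
    simpa only [hsum] using hasFDerivAt_const (1 : ℝ) θ
  set m := ∑ y', π θ y' * r θ y'
  have hterm : ∀ y, π θ y • (c • D y) + r θ y • (π θ y • D y) =
      (π θ y * (r θ y - m)) • D y + (c + m) • (π θ y • D y) := fun y => by module
  have h := HasFDerivAt.fun_sum (u := univ) fun y _ => (hπ y).mul (hr y)
  rwa [sum_congr rfl fun y _ => hterm y, sum_add_distrib, ← smul_sum, hscore, smul_zero,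
    add_zero] at h

theorem sqrt_le_rpow_mul_rpow {v M : ℝ} (hv : 0 ≤ v) (hM : 0 ≤ M) (hvM : v ≤ M ^ 2) :
    √v ≤ M ^ (1 / 3 : ℝ) * v ^ (1 / 3 : ℝ) :=
  calc √v = v ^ (1 / 6 : ℝ) * v ^ (1 / 3 : ℝ) := by
        rw [Real.sqrt_eq_rpow, ← Real.rpow_add' hv (by norm_num)]; norm_num
    _ ≤ (M ^ 2) ^ (1 / 6 : ℝ) * v ^ (1 / 3 : ℝ) := by gcongr
    _ = M ^ (1 / 3 : ℝ) * v ^ (1 / 3 : ℝ) := by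
        rw [← Real.rpow_natCast, ← Real.rpow_mul hM]; norm_num

section WeightedSums

variable {ι : Type*} (s : Finset ι) {p : ι → ℝ}

theorem sum_mul_abs_le_sqrt_sum_mul_sq (hp : ∀ i ∈ s, 0 ≤ p i) (hp1 : ∑ i ∈ s, p i = 1)
    (d : ι → ℝ) : ∑ i ∈ s, p i * |d i| ≤ √(∑ i ∈ s, p i * d i ^ 2) := by
  have hJensen := (convexOn_pow 2).map_sum_le hp hp1 fun i _ => Set.mem_Ici.mpr (abs_nonneg (d i))
  simp only [smul_eq_mul, sq_abs] at hJensen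
  exact (le_abs_self _).trans (Real.abs_le_sqrt hJensen)

theorem sum_mul_sub_sq_le_sq (hp : ∀ i ∈ s, 0 ≤ p i) (hp1 : ∑ i ∈ s, p i = 1) {r : ι → ℝ} {M : ℝ}
    (hr : ∀ i ∈ s, |r i| ≤ M) :
    ∑ i ∈ s, p i * (r i - ∑ j ∈ s, p j * r j) ^ 2 ≤ M ^ 2 := by
  set m := ∑ j ∈ s, p j * r j
  have hexpand : ∀ i, p i * (r i - m) ^ 2 = p i * r i ^ 2 - 2 * m * (p i * r i) + m ^ 2 * p i :=
    fun i => by ring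
  calc ∑ i ∈ s, p i * (r i - m) ^ 2 = ∑ i ∈ s, p i * r i ^ 2 - m ^ 2 := by
        simp only [hexpand, sum_add_distrib, sum_sub_distrib, ← mul_sum, hp1]; ring
    _ ≤ ∑ i ∈ s, p i * M ^ 2 := by
        refine (sub_le_self _ (sq_nonneg m)).trans (sum_le_sum fun i hi => ?_)
        obtain ⟨hlo, hhi⟩ := abs_le.mp (hr i hi)
        exact mul_le_mul_of_nonneg_left (sq_le_sq' hlo hhi) (hp i hi)
    _ = M ^ 2 := by rw [← sum_mul, hp1, one_mul]

theorem norm_sum_mul_sub_smul_le {F : Type*} [SeminormedAddCommGroup F] [NormedSpace ℝ F]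
    (hp : ∀ i ∈ s, 0 ≤ p i) (hp1 : ∑ i ∈ s, p i = 1) {r : ι → ℝ} {M : ℝ}
    (hr : ∀ i ∈ s, |r i| ≤ M) {u : ι → F} {C : ℝ} (hC : 0 ≤ C) (hu : ∀ i ∈ s, ‖u i‖ ≤ C) :
    ‖∑ i ∈ s, (p i * (r i - ∑ j ∈ s, p j * r j)) • u i‖ ≤
      C * M ^ (1 / 3 : ℝ) * (∑ i ∈ s, p i * (r i - ∑ j ∈ s, p j * r j) ^ 2) ^ (1 / 3 : ℝ) := by
  obtain ⟨i₀, hi₀⟩ := nonempty_of_sum_ne_zero (hp1.trans_ne one_ne_zero)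
  have hM : 0 ≤ M := (abs_nonneg _).trans (hr i₀ hi₀)
  set m := ∑ j ∈ s, p j * r j
  have hVar0 : 0 ≤ ∑ i ∈ s, p i * (r i - m) ^ 2 :=
    sum_nonneg fun i hi => mul_nonneg (hp i hi) (sq_nonneg _)
  calc _ ≤ C * ∑ i ∈ s, |p i * (r i - m)| := norm_sum_smul_le s _ u hu
    _ = C * ∑ i ∈ s, p i * |r i - m| := by
        congr 1; exact sum_congr rfl fun i hi => by rw [abs_mul, abs_of_nonneg (hp i hi)]
    _ ≤ C * √(∑ i ∈ s, p i * (r i - m) ^ 2) := by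
        gcongr; exact sum_mul_abs_le_sqrt_sum_mul_sq s hp hp1 _
    _ ≤ C * (M ^ (1 / 3 : ℝ) * (∑ i ∈ s, p i * (r i - m) ^ 2) ^ (1 / 3 : ℝ)) := by
        gcongr; exact sqrt_le_rpow_mul_rpow hVar0 hM (sum_mul_sub_sq_le_sq s hp hp1 hr)
    _ = _ := by ring

end WeightedSums

theorem grad_norm_bound_with_kl_general {P L : ℕ} {V X : Type*} [Fintype V]
    (f : EuclideanSpace ℝ (Fin P) → X → (Fin L → V) → Fin L → EuclideanSpace ℝ V)
    (hprefix : ∀ θ x (y y' : Fin L → V) (l : Fin L),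
      (∀ l' : Fin L, l' < l → y l' = y' l') → f θ x y l = f θ x y' l)
    (hdiff : ∀ x y l, Differentiable ℝ fun θ => f θ x y l)
    (rRM : X → (Fin L → V) → ℝ)
    (lam : ℝ)
    (θref θ : EuclideanSpace ℝ (Fin P)) (x : X)
    (M : ℝ)
    (rKL : (Fin L → V) → EuclideanSpace ℝ (Fin P) → ℝ)
    (hrKL : ∀ y ϑ, rKL y ϑ =
      rRM x y - lam * Real.log (softmaxPolicy f ϑ x y / softmaxPolicy f θref x y))
    (φx : EuclideanSpace ℝ (Fin P) → ℝ)
    (hφx : ∀ ϑ, φx ϑ = ∑ y : Fin L → V, softmaxPolicy f ϑ x y * rKL y ϑ)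
    (hbd : ∀ y : Fin L → V, rKL y θ ∈ Set.Icc (-M) M) :
    ‖gradient φx θ‖ ≤
      6 * M ^ ((1 : ℝ) / 3) * (L : ℝ) *
        (⨆ y : Fin L → V, ⨆ l : Fin L, ‖fderiv ℝ (fun ϑ => f ϑ x y l) θ‖) *
        (∑ y : Fin L → V, softmaxPolicy f θ x y * (rKL y θ - φx θ) ^ 2) ^ ((1 : ℝ) / 3) := by
  rcases isEmpty_or_nonempty (Fin L → V) with hY | hY
  · simp [show φx = fun _ => 0 from funext fun ϑ => by simp [hφx]]
  set J := ⨆ y : Fin L → V, ⨆ l : Fin L, ‖fderiv ℝ (fun ϑ => f ϑ x y l) θ‖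
  have hJ : ∀ y l, ‖fderiv ℝ (fun ϑ => f ϑ x y l) θ‖ ≤ J := fun y l =>
    le_ciSup_of_le (Finite.bddAbove_range _) y <|
      le_ciSup (Finite.bddAbove_range fun l => ‖fderiv ℝ (fun ϑ => f ϑ x y l) θ‖) l
  have hJ0 : 0 ≤ J := Real.iSup_nonneg fun y => Real.iSup_nonneg fun l => norm_nonneg _
  choose D hD hDJ using fun y => exists_hasFDerivAt_log_softmaxPolicy f θ x y
    (fun l => (hdiff x y l).differentiableAt) (hJ y)
  have hπ1 := sum_softmaxPolicy f x (hprefix · x)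
  have hφ := hasFDerivAt_sum_mul_of_hasFDerivAt_log (r := fun ϑ y => rKL y ϑ) (-lam)
    (softmaxPolicy_pos f · x ·) hπ1 hD fun y => by
      simpa only [hrKL] using hasFDerivAt_klReward f (hD y) θref (rRM x y) lam
  simp only [← hφx] at hφ
  have hbound := norm_sum_mul_sub_smul_le univ (fun y _ => (softmaxPolicy_pos f θ x y).le)
    (hπ1 θ) (fun y _ => abs_le.mpr (hbd y)) (mul_nonneg (by positivity) hJ0) fun y _ => hDJ y
  simp only [← hφx] at hbound
  calc ‖gradient φx θ‖ = ‖fderiv ℝ φx θ‖ := (InnerProductSpace.toDual ℝ _).symm.norm_map _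
    _ ≤ 2 * L * J * M ^ (1 / 3 : ℝ) *
        (∑ y, softmaxPolicy f θ x y * (rKL y θ - φx θ) ^ 2) ^ (1 / 3 : ℝ) := hφ.fderiv ▸ hbound
    _ ≤ _ := by linarith [(norm_nonneg _).trans hbound]

/-- Proposition 1: if the KL-regularized reward `r^KL(x, ·; θ)` lies in `[-M, M]`, then the
gradient of the per-prompt objective `φ(θ; x) = Σ_y π_θ(y|x) r^KL(x,y;θ)` satisfies
`‖∇_θ φ(θ;x)‖ ≤ 6 M^{1/3} L J_x · Var_{y∼π_θ(·|x)}[r^KL(x,y;θ)]^{1/3}`. -/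
theorem grad_norm_bound_with_kl {P L : ℕ} {V X : Type*} [Fintype V] [Fintype X]
    (f : EuclideanSpace ℝ (Fin P) → X → (Fin L → V) → Fin L → EuclideanSpace ℝ V)
    (hprefix : ∀ θ x (y y' : Fin L → V) (l : Fin L),
      (∀ l' : Fin L, l' < l → y l' = y' l') → f θ x y l = f θ x y' l)
    (hdiff : ∀ x y l, Differentiable ℝ fun θ => f θ x y l)
    (rRM : X → (Fin L → V) → ℝ)
    (hrRM : ∀ x y, rRM x y ∈ Set.Icc (-1 : ℝ) 1)
    (lam : ℝ) (hlam : 0 ≤ lam)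
    (θref θ : EuclideanSpace ℝ (Fin P)) (x : X)
    (M : ℝ) (hM : 1 < M)
    (rKL : (Fin L → V) → EuclideanSpace ℝ (Fin P) → ℝ)
    (hrKL : ∀ y ϑ, rKL y ϑ =
      rRM x y - lam * Real.log (softmaxPolicy f ϑ x y / softmaxPolicy f θref x y))
    (φx : EuclideanSpace ℝ (Fin P) → ℝ)
    (hφx : ∀ ϑ, φx ϑ = ∑ y : Fin L → V, softmaxPolicy f ϑ x y * rKL y ϑ)
    (hbd : ∀ y : Fin L → V, rKL y θ ∈ Set.Icc (-M) M) :
    ‖gradient φx θ‖ ≤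
      6 * M ^ ((1 : ℝ) / 3) * (L : ℝ) *
        (⨆ y : Fin L → V, ⨆ l : Fin L, ‖fderiv ℝ (fun ϑ => f ϑ x y l) θ‖) *
        (∑ y : Fin L → V, softmaxPolicy f θ x y * (rKL y θ - φx θ) ^ 2) ^ ((1 : ℝ) / 3) :=
  grad_norm_bound_with_kl_general f hprefix hdiff rRM lam θref θ x M rKL hrKL φx hφx hbd
end

section
/- For a tabular policy π_θ, any prompt x ∈ X, reward model r_RM, reference parameter θ_ref, and λ ≥ 0, the ℓ¹ norm of the gradient with respect to the column θ_{:,x} of the per-prompt objective φ(θ;x) = Σ_{y∈Y} π_θ(y|x) r^KL(x,y;θ) is at most the square root of the variance of the KL-regularized reward: ‖∇_{θ_{:,x}} φ(θ;x)‖₁ ≤ √(Var_{y∼π_θ(·|x)}[r^KL(x,y;θ)]). -/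
/-!
Write the objective as `u ↦ ∑ y, h_y (π_u y)` with `h_y t = t (r_RM y - λ log (t / π_ref y))`.
The softmax Jacobian is `∂π_y/∂u_z = π_y (δ_yz - π_z)`, so the gradient of such a sum is
`π ⊙ (h' - 𝔼_π h')`. Here `h'_y(π_y) = r^KL_y - λ`, and the constant `λ` is removed by the
centring, leaving the gradient `π_y (r^KL_y - φ)`. Jensen's inequality for `t ↦ t²` gives
`∑ π |d| ≤ √(∑ π d²)`.
-/

/-- Softmax distribution over outputs given a column of logits. -/
noncomputable def tabPol {Y : Type*} [Fintype Y] (u : EuclideanSpace ℝ Y) (y : Y) : ℝ :=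
  Real.exp (u y) / ∑ y' : Y, Real.exp (u y')

open Finset

section Softmax

variable {Y : Type*} [Fintype Y]

lemma sum_exp_ofLp_pos [Nonempty Y] (u : EuclideanSpace ℝ Y) : 0 < ∑ y : Y, Real.exp (u y) :=
  sum_pos (fun _ _ => Real.exp_pos _) univ_nonempty

lemma tabPol_pos [Nonempty Y] (u : EuclideanSpace ℝ Y) (y : Y) : 0 < tabPol u y :=
  div_pos (Real.exp_pos _) (sum_exp_ofLp_pos u)

lemma sum_tabPol [Nonempty Y] (u : EuclideanSpace ℝ Y) : ∑ y : Y, tabPol u y = 1 := by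
  simp only [tabPol, ← sum_div]
  exact div_self (sum_exp_ofLp_pos u).ne'

lemma tabPol_eq_exp_sub_log [Nonempty Y] (u : EuclideanSpace ℝ Y) (y : Y) :
    tabPol u y = Real.exp (u y - Real.log (∑ y' : Y, Real.exp (u y'))) := by
  rw [Real.exp_sub, Real.exp_log (sum_exp_ofLp_pos u), tabPol]

lemma hasFDerivAt_tabPol [Nonempty Y] (v : EuclideanSpace ℝ Y) (y : Y) :
    HasFDerivAt (fun u => tabPol u y)
      (tabPol v y • (EuclideanSpace.proj y - ∑ y' : Y, tabPol v y' • EuclideanSpace.proj y' :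
        EuclideanSpace ℝ Y →L[ℝ] ℝ)) v := by
  have hZ : HasFDerivAt (fun u : EuclideanSpace ℝ Y => ∑ y' : Y, Real.exp (u y'))
      (∑ y' : Y, Real.exp (v y') • EuclideanSpace.proj y') v :=
    HasFDerivAt.fun_sum fun y' _ => (EuclideanSpace.proj y').hasFDerivAt.exp
  have h := ((EuclideanSpace.proj y).hasFDerivAt.sub (hZ.log (sum_exp_ofLp_pos v).ne')).exp
  rw [funext (tabPol_eq_exp_sub_log · y), tabPol_eq_exp_sub_log v y]
  refine h.congr_fderiv ?_
  ext w
  simp [Real.exp_sub, Real.exp_log (sum_exp_ofLp_pos v), mul_sum, tabPol, div_eq_inv_mul, mul_assoc]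

lemma hasGradientAt_sum_comp_tabPol [Nonempty Y] (h : Y → ℝ → ℝ) (h' : Y → ℝ)
    (v : EuclideanSpace ℝ Y) (hh : ∀ y, HasDerivAt (h y) (h' y) (tabPol v y)) :
    HasGradientAt (fun u => ∑ y : Y, h y (tabPol u y))
      (WithLp.toLp 2 fun z => tabPol v z * (h' z - ∑ y : Y, tabPol v y * h' y)) v := by
  rw [hasGradientAt_iff_hasFDerivAt]
  refine (HasFDerivAt.fun_sum fun y _ =>
    (hh y).comp_hasFDerivAt v (hasFDerivAt_tabPol v y)).congr_fderiv ?_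
  ext w
  simp only [_root_.sum_apply, smul_apply, sub_apply, PiLp.proj_apply, smul_eq_mul,
    InnerProductSpace.toDual_apply_apply, PiLp.inner_apply, RCLike.inner_apply, Real.ringHom_apply,
    mul_sub, sum_sub_distrib, ← mul_assoc, ← sum_mul]
  grind

end Softmax

lemma hasDerivAt_mul_sub_mul_log_div {p q : ℝ} (hp : p ≠ 0) (hq : q ≠ 0) (a lam : ℝ) :
    HasDerivAt (fun t => t * (a - lam * Real.log (t / q)))
      (a - lam * Real.log (p / q) - lam) p := by
  have hlog := ((hasDerivAt_id' p).div_const q).log (div_ne_zero hp hq)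
  refine ((hasDerivAt_id' p).mul ((hlog.const_mul lam).const_sub a)).congr_deriv ?_
  field_simp
  ring

lemma sum_abs_mul_le_sqrt_sum_mul_sq {ι : Type*} (s : Finset ι) (p d : ι → ℝ)
    (hp : ∀ i ∈ s, 0 ≤ p i) (hs : ∑ i ∈ s, p i = 1) :
    ∑ i ∈ s, |p i * d i| ≤ Real.sqrt (∑ i ∈ s, p i * d i ^ 2) := by
  apply Real.le_sqrt_of_sq_le
  have h := (convexOn_pow 2).map_sum_le hp hs (p := fun i => |d i|) fun i _ => abs_nonneg (d i)
  calc (∑ i ∈ s, |p i * d i|) ^ 2 = (∑ i ∈ s, p i * |d i|) ^ 2 := by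
        rw [sum_congr rfl fun i hi => by rw [abs_mul, abs_of_nonneg (hp i hi)]]
    _ ≤ ∑ i ∈ s, p i * d i ^ 2 := by simpa using h

theorem tabular_grad_l1_norm_bound_with_kl_general {X Y : Type*} [Fintype Y]
    [DecidableEq X]
    (rRM : X → Y → ℝ)
    (lam : ℝ)
    (θref θ : X → EuclideanSpace ℝ Y)
    (rKL : (X → EuclideanSpace ℝ Y) → X → Y → ℝ)
    (hrKL : ∀ ϑ x y, rKL ϑ x y =
      rRM x y - lam * Real.log (tabPol (ϑ x) y / tabPol (θref x) y))
    (φ : X → (X → EuclideanSpace ℝ Y) → ℝ)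
    (hφ : ∀ x ϑ, φ x ϑ = ∑ y : Y, tabPol (ϑ x) y * rKL ϑ x y)
    (x : X) :
    ∑ y : Y, |gradient (fun u => φ x (Function.update θ x u)) (θ x) y| ≤
      Real.sqrt (∑ y : Y, tabPol (θ x) y * (rKL θ x y - φ x θ) ^ 2) := by
  cases isEmpty_or_nonempty Y
  · simp
  let h : Y → ℝ → ℝ := fun y t => t * (rRM x y - lam * Real.log (t / tabPol (θref x) y))
  have hobj : (fun u => φ x (Function.update θ x u)) = fun u => ∑ y, h y (tabPol u y) := by
    funext u
    simp [h, hφ, hrKL]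
  have hh : ∀ y, HasDerivAt (h y) (rKL θ x y - lam) (tabPol (θ x) y) := fun y =>
    (hasDerivAt_mul_sub_mul_log_div (tabPol_pos (θ x) y).ne' (tabPol_pos (θref x) y).ne' _ _
      ).congr_deriv (by rw [hrKL])
  have hmean : ∑ y, tabPol (θ x) y * (rKL θ x y - lam) = φ x θ - lam := by
    simp [mul_sub, sum_sub_distrib, ← sum_mul, sum_tabPol, hφ]
  rw [hobj, (hasGradientAt_sum_comp_tabPol h _ _ hh).gradient]
  simp only [hmean, sub_sub_sub_cancel_right]
  exact sum_abs_mul_le_sqrt_sum_mul_sq univ _ _ (fun y _ => (tabPol_pos _ y).le) (sum_tabPol _)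

/-- Lemma (ℓ¹ gradient bound for tabular policies): the ℓ¹ norm of the gradient of the
per-prompt objective `φ(θ;x) = Σ_y π_θ(y|x) r^KL(x,y;θ)` with respect to the column
`θ_{:,x}` is at most `√(Var_{y∼π_θ(·|x)}[r^KL(x,y;θ)])`. -/
theorem tabular_grad_l1_norm_bound_with_kl {X Y : Type*} [Fintype X] [Fintype Y]
    [DecidableEq X]
    (rRM : X → Y → ℝ) (hrRM : ∀ x y, rRM x y ∈ Set.Icc (-1 : ℝ) 1)
    (lam : ℝ) (hlam : 0 ≤ lam)
    (θref θ : X → EuclideanSpace ℝ Y)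
    (rKL : (X → EuclideanSpace ℝ Y) → X → Y → ℝ)
    (hrKL : ∀ ϑ x y, rKL ϑ x y =
      rRM x y - lam * Real.log (tabPol (ϑ x) y / tabPol (θref x) y))
    (φ : X → (X → EuclideanSpace ℝ Y) → ℝ)
    (hφ : ∀ x ϑ, φ x ϑ = ∑ y : Y, tabPol (ϑ x) y * rKL ϑ x y)
    (x : X) :
    ∑ y : Y, |gradient (fun u => φ x (Function.update θ x u)) (θ x) y| ≤
      Real.sqrt (∑ y : Y, tabPol (θ x) y * (rKL θ x y - φ x θ) ^ 2) :=
  tabular_grad_l1_norm_bound_with_kl_general rRM lam θref θ rKL hrKL φ hφ x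
end

section
/- Suppose gradient flow over a tabular policy is used to maximize the RLHF objective φ over a training set S. Then for any prompt x ∈ S, output y ∈ Y, and time t ≥ 0: (d/dt)π_{θ(t)}(y|x) = (1/|S|) · π_{θ(t)}(y|x)² · (r_RM(x,y) − V_RM(t)) − (1/|S|) · π_{θ(t)}(y|x) · Σ_{y'∈Y} π_{θ(t)}(y'|x)² · (r_RM(x,y') − V_RM(t)) − (λ/|S|) · π_{θ(t)}(y|x)² · (ln(π_{θ(t)}(y|x)/π_{θ(0)}(y|x)) − K(t)) + (λ/|S|) · π_{θ(t)}(y|x) · Σ_{y'∈Y} π_{θ(t)}(y'|x)² · (ln(π_{θ(t)}(y'|x)/π_{θ(0)}(y'|x)) − K(t)), where V_RM(t) = Σ_{y'∈Y} π_{θ(t)}(y'|x) r_RM(x,y') and K(t) = KL(π_{θ(t)}(·|x) ‖ π_{θ(0)}(·|x)). -/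
/-- A tabular policy: `π_θ(y|x) = softmax(θ_{:,x})_y` for parameters `θ ∈ ℝ^{Y×X}`. -/
noncomputable def tabPolicy {X Y : Type*} [Fintype Y]
    (θ : EuclideanSpace ℝ (Y × X)) (x : X) (y : Y) : ℝ :=
  Real.exp (θ (y, x)) / ∑ y' : Y, Real.exp (θ (y', x))

/-- The RLHF objective for tabular policies. -/
noncomputable def rlhfObjTab {X Y : Type*} [Fintype X] [Fintype Y]
    (S : Finset X) (rRM : X → Y → ℝ) (lam : ℝ)
    (θref θ : EuclideanSpace ℝ (Y × X)) : ℝ :=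
  (S.card : ℝ)⁻¹ * ∑ x ∈ S,
    ((∑ y : Y, tabPolicy θ x y * rRM x y) -
      lam * ∑ y : Y, tabPolicy θ x y * Real.log (tabPolicy θ x y / tabPolicy θref x y))

/-!
Differentiating `π(y|x) = exp (θ(y,x) - log ∑_{y'} exp θ(y',x))` gives the softmax Jacobian
`Dπ(y|x) = π(y|x) (e_{(y,x)} - ∑_{y'} π(y'|x) e_{(y',x)})`. Contracting it with the coefficients
`c = r(x,·) - λ (log (π/π_ref) + 1)` of the prompt-`x` term of `φ` and using `∑ π = 1`, the
coordinate `(y,x)` of `∇φ` is `|S|⁻¹ π(y|x) ((r(x,y) - V) - λ (log (π/π_ref)(y|x) - K))` for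
`x ∈ S`. Along the flow, `d/dt π(y|x) = Dπ(y|x) (∇φ)`, which is the stated formula.
-/

open Finset Real

theorem sum_smul_smul_sub_sum_smul {ι R M : Type*} [CommRing R] [AddCommGroup M] [Module R M]
    (s : Finset ι) (c p : ι → R) (P : ι → M) :
    ∑ i ∈ s, c i • p i • (P i - ∑ j ∈ s, p j • P j) =
      ∑ i ∈ s, (p i * (c i - ∑ j ∈ s, p j * c j)) • P i := by
  have hmean : ∑ i ∈ s, (p i * ∑ j ∈ s, p j * c j) • P i =
      (∑ j ∈ s, p j * c j) • ∑ i ∈ s, p i • P i := by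
    simp only [smul_sum, smul_smul, mul_comm]
  simp only [smul_sub, mul_sub, sub_smul, sum_sub_distrib, smul_smul, hmean,
    ← sum_smul, mul_comm (c _)]

theorem EuclideanSpace.gradient_apply {ι : Type*} [Fintype ι] [DecidableEq ι]
    (f : EuclideanSpace ℝ ι → ℝ) (θ : EuclideanSpace ℝ ι) (i : ι) :
    gradient f θ i = fderiv ℝ f θ (EuclideanSpace.single i 1) := by
  have h := InnerProductSpace.toDual_symm_apply (𝕜 := ℝ) (x := EuclideanSpace.single i 1)
    (y := fderiv ℝ f θ)
  rw [EuclideanSpace.inner_single_right, one_mul, conj_trivial] at h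
  exact h

section TabularPolicy

variable {X Y : Type*} [Fintype Y]

theorem sum_exp_pos [Nonempty Y] (θ : EuclideanSpace ℝ (Y × X)) (x : X) :
    0 < ∑ y : Y, exp (θ (y, x)) :=
  sum_pos (fun _ _ => exp_pos _) univ_nonempty

theorem tabPolicy_pos [Nonempty Y] (θ : EuclideanSpace ℝ (Y × X)) (x : X) (y : Y) :
    0 < tabPolicy θ x y :=
  div_pos (exp_pos _) (sum_exp_pos θ x)

theorem sum_tabPolicy [Nonempty Y] (θ : EuclideanSpace ℝ (Y × X)) (x : X) :
    ∑ y : Y, tabPolicy θ x y = 1 := by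
  simp only [tabPolicy, ← sum_div, div_self (sum_exp_pos θ x).ne']

theorem tabPolicy_eq_exp_sub_log [Nonempty Y] (θ : EuclideanSpace ℝ (Y × X)) (x : X) (y : Y) :
    tabPolicy θ x y = exp (θ (y, x) - log (∑ y' : Y, exp (θ (y', x)))) := by
  rw [exp_sub, exp_log (sum_exp_pos θ x), tabPolicy]

variable [Fintype X]

theorem hasFDerivAt_log_sum_exp [Nonempty Y] (θ : EuclideanSpace ℝ (Y × X)) (x : X) :
    HasFDerivAt (fun θ' : EuclideanSpace ℝ (Y × X) => log (∑ y : Y, exp (θ' (y, x))))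
      (∑ y : Y, tabPolicy θ x y • EuclideanSpace.proj (𝕜 := ℝ) (y, x)) θ := by
  have hsum := HasFDerivAt.fun_sum (u := univ) fun y _ =>
    (PiLp.hasFDerivAt_apply (𝕜 := ℝ) 2 θ (y, x)).exp
  refine (hsum.log (sum_exp_pos θ x).ne').congr_fderiv ?_
  simp only [tabPolicy, div_eq_inv_mul, smul_sum, smul_smul]

theorem hasFDerivAt_tabPolicy [Nonempty Y] (θ : EuclideanSpace ℝ (Y × X)) (x : X) (y : Y) :
    HasFDerivAt (fun θ' => tabPolicy θ' x y)
      (tabPolicy θ x y • (EuclideanSpace.proj (𝕜 := ℝ) (y, x) -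
        ∑ y' : Y, tabPolicy θ x y' • EuclideanSpace.proj (y', x))) θ := by
  have h := ((PiLp.hasFDerivAt_apply (𝕜 := ℝ) 2 θ (y, x)).fun_sub
    (hasFDerivAt_log_sum_exp θ x)).exp
  simpa only [← tabPolicy_eq_exp_sub_log] using h

theorem hasFDerivAt_mul_log_div_tabPolicy [Nonempty Y] (θref θ : EuclideanSpace ℝ (Y × X)) (x : X)
    (y : Y) :
    HasFDerivAt (fun θ' => tabPolicy θ' x y * log (tabPolicy θ' x y / tabPolicy θref x y))
      ((log (tabPolicy θ x y / tabPolicy θref x y) + 1) • tabPolicy θ x y •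
        (EuclideanSpace.proj (𝕜 := ℝ) (y, x) -
          ∑ y' : Y, tabPolicy θ x y' • EuclideanSpace.proj (y', x))) θ := by
  have hπ := hasFDerivAt_tabPolicy θ x y
  have hpos := tabPolicy_pos θ x y
  have hlog_div : ∀ θ' : EuclideanSpace ℝ (Y × X), log (tabPolicy θ' x y / tabPolicy θref x y) =
      log (tabPolicy θ' x y) - log (tabPolicy θref x y) := fun θ' =>
    log_div (tabPolicy_pos θ' x y).ne' (tabPolicy_pos θref x y).ne'
  simp only [hlog_div]
  refine (hπ.mul ((hπ.log hpos.ne').sub_const _)).congr_fderiv ?_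
  rw [smul_smul, mul_inv_cancel₀ hpos.ne', add_smul, one_smul, add_comm]

noncomputable def rlhfPromptGrad (rRM : X → Y → ℝ) (lam : ℝ) (θref θ : EuclideanSpace ℝ (Y × X))
    (x : X) (y : Y) : ℝ :=
  tabPolicy θ x y * ((rRM x y - ∑ y' : Y, tabPolicy θ x y' * rRM x y') -
    lam * (log (tabPolicy θ x y / tabPolicy θref x y) -
      ∑ y' : Y, tabPolicy θ x y' * log (tabPolicy θ x y' / tabPolicy θref x y')))

theorem hasFDerivAt_rlhfPrompt [Nonempty Y] (rRM : X → Y → ℝ) (lam : ℝ)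
    (θref θ : EuclideanSpace ℝ (Y × X)) (x : X) :
    HasFDerivAt (fun θ' => (∑ y : Y, tabPolicy θ' x y * rRM x y) -
        lam * ∑ y : Y, tabPolicy θ' x y * log (tabPolicy θ' x y / tabPolicy θref x y))
      (∑ y : Y, rlhfPromptGrad rRM lam θref θ x y • EuclideanSpace.proj (𝕜 := ℝ) (y, x)) θ := by
  have hreward := HasFDerivAt.fun_sum (u := univ) fun y _ =>
    (hasFDerivAt_tabPolicy θ x y).mul_const (rRM x y)
  have hkl := HasFDerivAt.fun_sum (u := univ) fun y _ =>
    hasFDerivAt_mul_log_div_tabPolicy θref θ x y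
  refine (hreward.sub (hkl.const_mul lam)).congr_fderiv ?_
  have hmean : ∑ y : Y, tabPolicy θ x y *
        (rRM x y - lam * (log (tabPolicy θ x y / tabPolicy θref x y) + 1)) =
      (∑ y : Y, tabPolicy θ x y * rRM x y) -
        lam * ((∑ y : Y, tabPolicy θ x y * log (tabPolicy θ x y / tabPolicy θref x y)) + 1) := by
    simp only [mul_sub, mul_add, mul_one, sum_sub_distrib, sum_add_distrib, ← mul_sum, ← sum_mul,
      sum_tabPolicy, one_mul, mul_left_comm (tabPolicy θ x _) lam]
  rw [smul_sum, ← sum_sub_distrib]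
  simp only [smul_smul lam, ← sub_smul]
  rw [sum_smul_smul_sub_sum_smul, hmean]
  refine sum_congr rfl fun y _ => congrArg (· • _) ?_
  rw [rlhfPromptGrad]
  ring

theorem hasFDerivAt_rlhfObjTab [Nonempty Y] (S : Finset X) (rRM : X → Y → ℝ) (lam : ℝ)
    (θref θ : EuclideanSpace ℝ (Y × X)) :
    HasFDerivAt (rlhfObjTab S rRM lam θref) ((S.card : ℝ)⁻¹ •
      ∑ x ∈ S, ∑ y : Y, rlhfPromptGrad rRM lam θref θ x y • EuclideanSpace.proj (𝕜 := ℝ) (y, x))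
      θ :=
  (HasFDerivAt.fun_sum fun x _ => hasFDerivAt_rlhfPrompt rRM lam θref θ x).const_mul _

theorem gradient_rlhfObjTab_apply [Nonempty Y] {S : Finset X} (rRM : X → Y → ℝ) (lam : ℝ)
    (θref θ : EuclideanSpace ℝ (Y × X)) {x : X} (hx : x ∈ S) (y : Y) :
    gradient (rlhfObjTab S rRM lam θref) θ (y, x) =
      (S.card : ℝ)⁻¹ * rlhfPromptGrad rRM lam θref θ x y := by
  classical
  rw [EuclideanSpace.gradient_apply, (hasFDerivAt_rlhfObjTab S rRM lam θref θ).fderiv]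
  simp only [smul_apply, _root_.sum_apply, PiLp.proj_apply, PiLp.single_apply, Prod.mk.injEq,
    ite_and, smul_eq_mul, mul_ite, mul_one, mul_zero, sum_ite_eq', mem_univ, if_true, hx]

theorem hasDerivAt_tabPolicy_comp [Nonempty Y] {θ : ℝ → EuclideanSpace ℝ (Y × X)}
    {θ' : EuclideanSpace ℝ (Y × X)} {t : ℝ} (hθ : HasDerivAt θ θ' t) (x : X) (y : Y) :
    HasDerivAt (fun s => tabPolicy (θ s) x y)
      (tabPolicy (θ t) x y * (θ' (y, x) - ∑ y' : Y, tabPolicy (θ t) x y' * θ' (y', x))) t := by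
  refine ((hasFDerivAt_tabPolicy (θ t) x y).comp_hasDerivAt t hθ).congr_deriv ?_
  simp only [smul_apply, sub_apply, PiLp.proj_apply, _root_.sum_apply, smul_eq_mul]

end TabularPolicy

theorem kl_prob_time_deriv_general {X Y : Type*} [Fintype X] [Fintype Y]
    (rRM : X → Y → ℝ)
    (lam : ℝ)
    (S : Finset X)
    (θref : EuclideanSpace ℝ (Y × X))
    (θ : ℝ → EuclideanSpace ℝ (Y × X)) (hθ0 : θ 0 = θref)
    (hflow : ∀ t : ℝ, 0 ≤ t →
      HasDerivAt θ (gradient (rlhfObjTab S rRM lam θref) (θ t)) t)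
    (x : X) (hx : x ∈ S) (y : Y) (t : ℝ) (ht : 0 ≤ t)
    (VRM : ℝ) (hVRM : VRM = ∑ y' : Y, tabPolicy (θ t) x y' * rRM x y')
    (K : ℝ) (hK : K = ∑ y' : Y, tabPolicy (θ t) x y' *
      Real.log (tabPolicy (θ t) x y' / tabPolicy (θ 0) x y')) :
    HasDerivAt (fun s => tabPolicy (θ s) x y)
      ((S.card : ℝ)⁻¹ * tabPolicy (θ t) x y ^ 2 * (rRM x y - VRM)
        - (S.card : ℝ)⁻¹ * tabPolicy (θ t) x y *
            ∑ y' : Y, tabPolicy (θ t) x y' ^ 2 * (rRM x y' - VRM)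
        - lam / (S.card : ℝ) * tabPolicy (θ t) x y ^ 2 *
            (Real.log (tabPolicy (θ t) x y / tabPolicy (θ 0) x y) - K)
        + lam / (S.card : ℝ) * tabPolicy (θ t) x y *
            ∑ y' : Y, tabPolicy (θ t) x y' ^ 2 *
              (Real.log (tabPolicy (θ t) x y' / tabPolicy (θ 0) x y') - K)) t := by
  have : Nonempty Y := ⟨y⟩
  subst hθ0
  have hderiv := hasDerivAt_tabPolicy_comp (hflow t ht) x y
  set p := tabPolicy (θ t) x
  set n : ℝ := (S.card : ℝ)
  have hgrad (y' : Y) : gradient (rlhfObjTab S rRM lam (θ 0)) (θ t) (y', x) =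
      n⁻¹ * (p y' * ((rRM x y' - VRM) - lam * (log (p y' / tabPolicy (θ 0) x y') - K))) := by
    rw [gradient_rlhfObjTab_apply rRM lam _ _ hx, rlhfPromptGrad, hVRM, hK]
  have hmean : ∑ y' : Y, p y' *
        (n⁻¹ * (p y' * ((rRM x y' - VRM) - lam * (log (p y' / tabPolicy (θ 0) x y') - K)))) =
      n⁻¹ * ∑ y' : Y, p y' ^ 2 * (rRM x y' - VRM) -
        lam / n * ∑ y' : Y, p y' ^ 2 * (log (p y' / tabPolicy (θ 0) x y') - K) := by
    rw [mul_sum, mul_sum, ← sum_sub_distrib]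
    exact sum_congr rfl fun _ _ => by ring
  simp only [hgrad, hmean] at hderiv
  convert hderiv using 1
  ring

/-- Lemma (time derivative of policy probabilities under gradient flow): for a tabular
policy trained via gradient flow on the RLHF objective, for `x ∈ S`, `y ∈ Y`, `t ≥ 0`,
the derivative of `t ↦ π_{θ(t)}(y|x)` equals the claimed expression involving the reward
model, the expected reward `V_RM(t)` and the KL divergence `K(t)`. -/
theorem kl_prob_time_deriv {X Y : Type*} [Fintype X] [Fintype Y]
    (rRM : X → Y → ℝ) (hrRM : ∀ x y, rRM x y ∈ Set.Icc (-1 : ℝ) 1)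
    (lam : ℝ) (hlam : 0 ≤ lam)
    (S : Finset X) (hS : S.Nonempty)
    (θref : EuclideanSpace ℝ (Y × X))
    (θ : ℝ → EuclideanSpace ℝ (Y × X)) (hθ0 : θ 0 = θref)
    (hflow : ∀ t : ℝ, 0 ≤ t →
      HasDerivAt θ (gradient (rlhfObjTab S rRM lam θref) (θ t)) t)
    (x : X) (hx : x ∈ S) (y : Y) (t : ℝ) (ht : 0 ≤ t)
    (VRM : ℝ) (hVRM : VRM = ∑ y' : Y, tabPolicy (θ t) x y' * rRM x y')
    (K : ℝ) (hK : K = ∑ y' : Y, tabPolicy (θ t) x y' *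
      Real.log (tabPolicy (θ t) x y' / tabPolicy (θ 0) x y')) :
    HasDerivAt (fun s => tabPolicy (θ s) x y)
      ((S.card : ℝ)⁻¹ * tabPolicy (θ t) x y ^ 2 * (rRM x y - VRM)
        - (S.card : ℝ)⁻¹ * tabPolicy (θ t) x y *
            ∑ y' : Y, tabPolicy (θ t) x y' ^ 2 * (rRM x y' - VRM)
        - lam / (S.card : ℝ) * tabPolicy (θ t) x y ^ 2 *
            (Real.log (tabPolicy (θ t) x y / tabPolicy (θ 0) x y) - K)
        + lam / (S.card : ℝ) * tabPolicy (θ t) x y *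
            ∑ y' : Y, tabPolicy (θ t) x y' ^ 2 *
              (Real.log (tabPolicy (θ t) x y' / tabPolicy (θ 0) x y') - K)) t :=
  kl_prob_time_deriv_general rRM lam S θref θ hθ0 hflow x hx y t ht VRM hVRM K hK
end
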